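/- arXiv:2602.23778 — 4 statements merged into one kernel-verified Lean document; each statement's English description precedes it below -/
import Mathlib

section
/- Let Q ∈ ℝ^{n×k} (k ≤ n) have orthonormal columns, write Q as block (Q₁; Q₂) with Q₁ the leading k×k block, set Y = Q - I_{n,k} (where I_{n,k} is the first k columns of the identity) and suppose the leading k×k block Y₁ = Q₁ - I_k of Y is invertible. Then with T = -Y₁⁻ᵀ, the matrix H = I_n - Y T Yᵀ is orthogonal and satisfies H I_{n,k} = Q, equivalently Hᵀ Q = I_{n,k}. -/
open Matrix

/-- The `n × k` matrix consisting of the first `k` columns of the `n × n` identity. -/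
def Ink (n k : ℕ) : Matrix (Fin n) (Fin k) ℝ :=
  fun i j => if (i : ℕ) = (j : ℕ) then 1 else 0

lemma Ink_mul_left {n k : ℕ} (hkn : k ≤ n) (M : Matrix (Fin n) (Fin k) ℝ) :
    (Ink n k)ᵀ * M = fun i j => M (Fin.castLE hkn i) j := by
  ext i j
  rw [Matrix.mul_apply]
  have hiff : ∀ l : Fin n, ((l : ℕ) = (i : ℕ)) ↔ l = Fin.castLE hkn i := by
    intro l
    constructor
    · intro h; exact Fin.ext h
    · intro h; subst h; rfl
  simp only [Matrix.transpose_apply, Ink, ite_mul, one_mul, zero_mul, hiff]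
  rw [Finset.sum_ite_eq' Finset.univ (Fin.castLE hkn i) (fun l => M l j)]
  simp

lemma Ink_orth {n k : ℕ} (hkn : k ≤ n) : (Ink n k)ᵀ * Ink n k = 1 := by
  rw [Ink_mul_left hkn]
  ext i j
  simp only [Ink, Matrix.one_apply, Fin.coe_castLE]
  exact if_congr (by simp [Fin.ext_iff]) rfl rfl

/-- Compact WY construction: if `Q` has orthonormal columns, `Y = Q - I_{n,k}`, and the
leading `k × k` block `Y₁` of `Y` is invertible, then with `T = -Y₁⁻ᵀ` the matrix
`H = I - Y T Yᵀ` is orthogonal and `H I_{n,k} = Q`, equivalently `Hᵀ Q = I_{n,k}`. -/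
theorem stmt3 {n k : ℕ} (hkn : k ≤ n) (Q : Matrix (Fin n) (Fin k) ℝ)
    (hQ : Qᵀ * Q = 1)
    (Y : Matrix (Fin n) (Fin k) ℝ) (hY : Y = Q - Ink n k)
    (Y₁ : Matrix (Fin k) (Fin k) ℝ) (hY₁ : ∀ i j : Fin k, Y₁ i j = Y (Fin.castLE hkn i) j)
    (hY₁inv : IsUnit Y₁.det)
    (T : Matrix (Fin k) (Fin k) ℝ) (hT : T = -(Y₁ᵀ)⁻¹)
    (H : Matrix (Fin n) (Fin n) ℝ) (hH : H = 1 - Y * T * Yᵀ) :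
    Hᵀ * H = 1 ∧ H * Ink n k = Q ∧ Hᵀ * Q = Ink n k := by
  set E := Ink n k with hE
  -- Eᵀ Y = Y₁
  have hEY : Eᵀ * Y = Y₁ := by
    rw [Ink_mul_left hkn]
    ext i j
    exact (hY₁ i j).symm
  have hYE : Yᵀ * E = Y₁ᵀ := by
    have := congrArg Matrix.transpose hEY
    simpa [Matrix.transpose_mul] using this
  have hEE : Eᵀ * E = 1 := Ink_orth hkn
  -- Eᵀ Q and Qᵀ E
  have hEQ : Eᵀ * Q = Y₁ + 1 := by
    have h : Y₁ = Eᵀ * Q - 1 := by rw [← hEY, hY, Matrix.mul_sub, hEE]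
    rw [h]; abel
  have hQE : Qᵀ * E = Y₁ᵀ + 1 := by
    have := congrArg Matrix.transpose hEQ
    simpa [Matrix.transpose_mul, Matrix.transpose_add] using this
  -- Yᵀ Y = -Y₁ - Y₁ᵀ
  have hYtY : Yᵀ * Y = -Y₁ - Y₁ᵀ := by
    have h1 : Yᵀ * Y = (Qᵀ - Eᵀ) * (Q - E) := by rw [hY, Matrix.transpose_sub]
    rw [h1, Matrix.sub_mul, Matrix.mul_sub, Matrix.mul_sub, hQ, hQE, hEQ, hEE]
    abel
  -- properties of T
  have hY₁tdet : IsUnit Y₁ᵀ.det := by rwa [Matrix.det_transpose]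
  have hTY₁t : T * Y₁ᵀ = -1 := by
    rw [hT, Matrix.neg_mul, Matrix.nonsing_inv_mul _ hY₁tdet]
  have hY₁tT : Y₁ᵀ * T = -1 := by
    rw [hT, Matrix.mul_neg, Matrix.mul_nonsing_inv _ hY₁tdet]
  have hTt : Tᵀ = -Y₁⁻¹ := by
    rw [hT, Matrix.transpose_neg, Matrix.transpose_nonsing_inv, Matrix.transpose_transpose]
  have hTtY₁ : Tᵀ * Y₁ = -1 := by
    rw [hTt, Matrix.neg_mul, Matrix.nonsing_inv_mul _ hY₁inv]
  have hY₁Tt : Y₁ * Tᵀ = -1 := by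
    rw [hTt, Matrix.mul_neg, Matrix.mul_nonsing_inv _ hY₁inv]
  -- key identity
  have key : Tᵀ * (Yᵀ * Y) * T = Tᵀ + T := by
    have h1 : Tᵀ * (Yᵀ * Y) * T = -((Tᵀ * Y₁) * T) - Tᵀ * (Y₁ᵀ * T) := by
      rw [hYtY]; noncomm_ring
    rw [h1, hTtY₁, hY₁tT]
    noncomm_ring
  have hBA : (Y * Tᵀ * Yᵀ) * (Y * T * Yᵀ) = Y * T * Yᵀ + Y * Tᵀ * Yᵀ := by
    have h1 : (Y * Tᵀ * Yᵀ) * (Y * T * Yᵀ) = Y * (Tᵀ * (Yᵀ * Y) * T) * Yᵀ := by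
      simp only [Matrix.mul_assoc]
    rw [h1, key, Matrix.mul_add, Matrix.add_mul]
    abel
  have hHt : Hᵀ = 1 - Y * Tᵀ * Yᵀ := by
    rw [hH]
    simp [Matrix.transpose_sub, Matrix.transpose_mul, Matrix.mul_assoc]
  have horth : Hᵀ * H = 1 := by
    rw [hHt, hH]
    have h1 : (1 - Y * Tᵀ * Yᵀ) * (1 - Y * T * Yᵀ)
        = 1 - Y * T * Yᵀ - Y * Tᵀ * Yᵀ + (Y * Tᵀ * Yᵀ) * (Y * T * Yᵀ) := by
      noncomm_ring
    rw [h1, hBA]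
    noncomm_ring
  have hHE : H * E = Q := by
    rw [hH, Matrix.sub_mul, Matrix.one_mul]
    have h1 : Y * T * Yᵀ * E = Y * (T * Y₁ᵀ) := by
      rw [Matrix.mul_assoc, Matrix.mul_assoc, hYE]
    rw [h1, hTY₁t, Matrix.mul_neg, Matrix.mul_one, sub_neg_eq_add, hY]
    abel
  refine ⟨horth, hHE, ?_⟩
  rw [← hHE, ← Matrix.mul_assoc, horth, Matrix.one_mul]
end

section
/- Let A be a real symmetric n×n matrix, x a unit eigenvector of A with eigenvalue λ, and x̂ a nonzero vector. Then the Rayleigh quotient d̂ = (x̂ᵀ A x̂)/(x̂ᵀ x̂) satisfies |λ - d̂| ≤ 2‖A‖·‖x - x̂‖/‖x̂‖ + ‖A‖·‖x - x̂‖²/‖x̂‖² , in particular the Rayleigh quotient error is controlled by the eigenvector error. -/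
/-!
Write `e = x - x̂`. Expanding `x̂ = x - e` and using `Ax = λx` together with the symmetry of `A`,
the terms of first order in `e` cancel:
`λ‖x̂‖² - ⟪Ax̂, x̂⟫ = λ‖e‖² - ⟪Ae, e⟫`, so `|λ - d̂| ≤ 2‖A‖ t²` with `t = ‖e‖/‖x̂‖`.
Since also `|λ - d̂| ≤ |λ| + |d̂| ≤ 2‖A‖` and `min (t², 1) ≤ t`, we get `|λ - d̂| ≤ 2‖A‖ t`.
-/

open Matrix
open scoped Matrix.Norms.L2Operator InnerProductSpace

theorem le_mul_of_le_mul_sq_of_le {a c t : ℝ} (hc : 0 ≤ c) (ht : 0 ≤ t)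
    (hsq : a ≤ c * t ^ 2) (hone : a ≤ c) : a ≤ c * t := by
  rcases le_total t 1 with ht1 | ht1
  · exact hsq.trans (mul_le_mul_of_nonneg_left (by nlinarith) hc)
  · exact hone.trans (le_mul_of_one_le_right hc ht1)

section RayleighQuotient

variable {E : Type*} [NormedAddCommGroup E] [InnerProductSpace ℝ E]

theorem LinearMap.IsSymmetric.mul_inner_self_sub_inner_apply_self {T : E →ₗ[ℝ] E}
    (hT : T.IsSymmetric) {x : E} {μ : ℝ} (hx : T x = μ • x) (y : E) :
    μ * ⟪y, y⟫_ℝ - ⟪T y, y⟫_ℝ = μ * ‖x - y‖ ^ 2 - ⟪T (x - y), x - y⟫_ℝ := by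
  have hxe : ⟪T (x - y), x⟫_ℝ = μ * ⟪x - y, x⟫_ℝ := by
    rw [hT, hx, real_inner_smul_right]
  obtain ⟨e, rfl⟩ : ∃ e, y = x - e := ⟨x - y, (sub_sub_cancel x y).symm⟩
  simp only [sub_sub_cancel] at hxe ⊢
  simp only [map_sub, hx, inner_sub_left, inner_sub_right, real_inner_smul_left, hxe,
    real_inner_comm e x, real_inner_self_eq_norm_sq]
  ring

namespace ContinuousLinearMap

variable {T : E →L[ℝ] E} {x : E} {μ : ℝ}

theorem abs_eigenvalue_le_opNorm (hx : T x = μ • x) (hx0 : x ≠ 0) : |μ| ≤ ‖T‖ := by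
  have h : |μ| * ‖x‖ ≤ ‖T‖ * ‖x‖ := by
    simpa [hx, norm_smul] using T.le_opNorm x
  exact le_of_mul_le_mul_right h (norm_pos_iff.mpr hx0)

theorem abs_inner_apply_self_le (T : E →L[ℝ] E) (v : E) : |⟪T v, v⟫_ℝ| ≤ ‖T‖ * ‖v‖ ^ 2 :=
  calc |⟪T v, v⟫_ℝ| ≤ ‖T v‖ * ‖v‖ := abs_real_inner_le_norm _ _
    _ ≤ ‖T‖ * ‖v‖ * ‖v‖ := by gcongr; exact T.le_opNorm v
    _ = ‖T‖ * ‖v‖ ^ 2 := by ring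

theorem abs_eigenvalue_sub_rayleighQuotient_le_opNorm_mul_sq
    (hT : (T : E →ₗ[ℝ] E).IsSymmetric) (hx : T x = μ • x) (hx0 : x ≠ 0) {y : E} (hy : y ≠ 0) :
    |μ - T.rayleighQuotient y| ≤ 2 * ‖T‖ * (‖x - y‖ / ‖y‖) ^ 2 := by
  have hy2 : 0 < ‖y‖ ^ 2 := by positivity
  have hnum : |μ * ‖x - y‖ ^ 2 - ⟪T (x - y), x - y⟫_ℝ| ≤ 2 * ‖T‖ * ‖x - y‖ ^ 2 :=
    calc _ ≤ |μ * ‖x - y‖ ^ 2| + |⟪T (x - y), x - y⟫_ℝ| := abs_sub _ _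
      _ = |μ| * ‖x - y‖ ^ 2 + |⟪T (x - y), x - y⟫_ℝ| := by rw [abs_mul, abs_sq]
      _ ≤ ‖T‖ * ‖x - y‖ ^ 2 + ‖T‖ * ‖x - y‖ ^ 2 := by
          gcongr
          · exact abs_eigenvalue_le_opNorm hx hx0
          · exact T.abs_inner_apply_self_le _
      _ = 2 * ‖T‖ * ‖x - y‖ ^ 2 := by ring
  have hdiff : μ - T.rayleighQuotient y
      = (μ * ‖x - y‖ ^ 2 - ⟪T (x - y), x - y⟫_ℝ) / ‖y‖ ^ 2 := by
    have key := hT.mul_inner_self_sub_inner_apply_self hx y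
    simp only [coe_coe] at key
    rw [← key, real_inner_self_eq_norm_sq,
      rayleighQuotient, reApplyInnerSelf_apply, RCLike.re_to_real]
    field_simp
  rw [hdiff, abs_div, abs_of_pos hy2, div_pow, ← mul_div_assoc]
  exact div_le_div_of_nonneg_right hnum hy2.le

theorem abs_eigenvalue_sub_rayleighQuotient_le_two_mul_opNorm (hx : T x = μ • x) (hx0 : x ≠ 0)
    (y : E) : |μ - T.rayleighQuotient y| ≤ 2 * ‖T‖ :=
  calc |μ - T.rayleighQuotient y| ≤ |μ| + |T.rayleighQuotient y| := abs_sub _ _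
    _ ≤ ‖T‖ + ‖T‖ := add_le_add (abs_eigenvalue_le_opNorm hx hx0) (T.rayleighQuotient_le_norm y)
    _ = 2 * ‖T‖ := by ring

theorem abs_eigenvalue_sub_rayleighQuotient_le
    (hT : (T : E →ₗ[ℝ] E).IsSymmetric) (hx : T x = μ • x) (hx0 : x ≠ 0) {y : E} (hy : y ≠ 0) :
    |μ - T.rayleighQuotient y| ≤ 2 * ‖T‖ * (‖x - y‖ / ‖y‖) :=
  le_mul_of_le_mul_sq_of_le (by positivity) (by positivity)
    (abs_eigenvalue_sub_rayleighQuotient_le_opNorm_mul_sq hT hx hx0 hy)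
    (abs_eigenvalue_sub_rayleighQuotient_le_two_mul_opNorm hx hx0 y)

end ContinuousLinearMap

end RayleighQuotient

/-- Rayleigh quotient error bound: if `A` is symmetric, `Ax = λx` with `‖x‖ = 1`, and
`x̂ ≠ 0`, then the Rayleigh quotient `d̂ = ⟪x̂, Ax̂⟫/⟪x̂, x̂⟫` satisfies
`|λ - d̂| ≤ 2‖A‖‖x - x̂‖/‖x̂‖ + ‖A‖‖x - x̂‖²/‖x̂‖²`. -/
theorem stmt5 {n : ℕ} (A : Matrix (Fin n) (Fin n) ℝ) (hA : Aᵀ = A)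
    (x xhat : EuclideanSpace ℝ (Fin n)) (lam : ℝ)
    (hx : Matrix.toEuclideanLin A x = lam • x) (hxnorm : ‖x‖ = 1) (hxhat : xhat ≠ 0)
    (dhat : ℝ)
    (hdhat : dhat = ⟪xhat, Matrix.toEuclideanLin A xhat⟫_ℝ / ⟪xhat, xhat⟫_ℝ) :
    |lam - dhat| ≤ 2 * ‖A‖ * ‖x - xhat‖ / ‖xhat‖ + ‖A‖ * ‖x - xhat‖ ^ 2 / ‖xhat‖ ^ 2 := by
  set T := toEuclideanCLM (𝕜 := ℝ) A
  have hT : (T : EuclideanSpace ℝ (Fin n) →ₗ[ℝ] EuclideanSpace ℝ (Fin n)).IsSymmetric :=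
    isSymmetric_toEuclideanLin_iff.mpr (isHermitian_iff_isSymm.mpr hA)
  have hx0 : x ≠ 0 := norm_ne_zero_iff.mp (by simp [hxnorm])
  have hdhat_eq : dhat = T.rayleighQuotient xhat := by
    rw [hdhat, real_inner_comm, real_inner_self_eq_norm_sq, ContinuousLinearMap.rayleighQuotient,
      ContinuousLinearMap.reApplyInnerSelf_apply, RCLike.re_to_real]
    rfl
  calc |lam - dhat| ≤ 2 * ‖A‖ * (‖x - xhat‖ / ‖xhat‖) := by
        rw [hdhat_eq]
        exact ContinuousLinearMap.abs_eigenvalue_sub_rayleighQuotient_le hT hx hx0 hxhat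
    _ ≤ 2 * ‖A‖ * ‖x - xhat‖ / ‖xhat‖ + ‖A‖ * ‖x - xhat‖ ^ 2 / ‖xhat‖ ^ 2 := by
        rw [← mul_div_assoc]
        exact le_add_of_nonneg_right (by positivity)
end

section
/- Let A be a real symmetric n×n matrix and H an orthogonal matrix satisfying Hᵀ A H = diag(D₁, D₂) block-diagonal with D₁ ∈ ℝ^{k×k} and D₂ ∈ ℝ^{(n-k)×(n-k)}. If Ĥ = H(I + E)⁻¹ with ‖E‖ < 1, then Ĥᵀ A Ĥ = D - D E - Eᵀ D + Φ₂ where D = diag(D₁,D₂) and ‖Φ₂‖ ≤ χ(ε)‖A‖ε² with ε = ‖E‖ and χ(ε) = (3-2ε)/(1-ε)². -/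
/-!
Write `F = (1 + E)⁻¹` and `K = E F`, so that `F = 1 - K`, `E - K = E K`, and `D = Hᵀ A H` has
`‖D‖ = ‖A‖` because `H` is orthogonal. Expanding the congruence,
`Ĥᵀ A Ĥ = Fᵀ D F = D - D E - Eᵀ D + Φ₂` with `Φ₂ = D (E - K) + (E - K)ᵀ D + Kᵀ D K`.
From `K = E - E K` one gets `‖K‖ ≤ ε / (1 - ε)`, hence `‖E - K‖ ≤ ε² / (1 - ε)` and
`‖Φ₂‖ ≤ ‖D‖ (2 ε² / (1 - ε) + ε² / (1 - ε)²) = χ(ε) ‖D‖ ε²`.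
Everything except `‖D‖ = ‖A‖` holds in any normed ring with an isometric involution.
-/

open Matrix
open scoped Matrix.Norms.L2Operator

theorem two_mul_mul_add_sq_le_of_le_div {ε κ : ℝ} (hε : 0 ≤ ε) (hε1 : ε < 1) (hκ0 : 0 ≤ κ)
    (hκ : κ ≤ ε / (1 - ε)) : 2 * (ε * κ) + κ ^ 2 ≤ (3 - 2 * ε) / (1 - ε) ^ 2 * ε ^ 2 := by
  have h1 : 0 < 1 - ε := by linarith
  calc 2 * (ε * κ) + κ ^ 2 ≤ 2 * (ε * (ε / (1 - ε))) + (ε / (1 - ε)) ^ 2 := by gcongr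
    _ = (3 - 2 * ε) / (1 - ε) ^ 2 * ε ^ 2 := by field_simp; ring

theorem star_one_sub_mul_mul_one_sub {R : Type*} [Ring R] [StarRing R] (D E K : R) :
    star (1 - K) * D * (1 - K) = D - D * E - star E * D +
      (D * (E - K) + star (E - K) * D + star K * D * K) := by
  simp only [star_sub, star_one]
  noncomm_ring

section NormedRing

variable {R : Type*} [NormedRing R]

theorem norm_mul_le_div_of_one_add_mul_eq_one {E F : R} (hF : (1 + E) * F = 1)
    (hE : ‖E‖ < 1) : ‖E * F‖ ≤ ‖E‖ / (1 - ‖E‖) := by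
  have hEF : E * F = E - E * (E * F) := by
    rw [eq_sub_iff_add_eq, ← mul_add, ← one_add_mul, hF, mul_one]
  have h : ‖E * F‖ ≤ ‖E‖ + ‖E‖ * ‖E * F‖ :=
    calc ‖E * F‖ = ‖E - E * (E * F)‖ := by rw [← hEF]
      _ ≤ ‖E‖ + ‖E * (E * F)‖ := norm_sub_le _ _
      _ ≤ ‖E‖ + ‖E‖ * ‖E * F‖ := by gcongr; exact norm_mul_le _ _
  rw [le_div_iff₀ (by linarith)]
  linarith

variable [StarRing R] [NormedStarGroup R]

theorem norm_congruence_remainder_le (D E K : R) :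
    ‖D * (E - K) + star (E - K) * D + star K * D * K‖ ≤ ‖D‖ * (2 * ‖E - K‖ + ‖K‖ ^ 2) := by
  calc _ ≤ ‖D * (E - K)‖ + ‖star (E - K) * D‖ + ‖star K * D * K‖ := norm_add₃_le
    _ ≤ ‖D‖ * ‖E - K‖ + ‖E - K‖ * ‖D‖ + ‖K‖ * ‖D‖ * ‖K‖ := by
        gcongr
        · exact norm_mul_le _ _
        · exact (norm_mul_le _ _).trans_eq (by rw [norm_star])
        · refine (norm_mul_le _ _).trans ?_
          gcongr
          exact (norm_mul_le _ _).trans_eq (by rw [norm_star])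
    _ = ‖D‖ * (2 * ‖E - K‖ + ‖K‖ ^ 2) := by ring

theorem exists_remainder_star_mul_mul_of_one_add_mul_eq_one {E F : R} (hF : (1 + E) * F = 1)
    (hE : ‖E‖ < 1) (D : R) :
    ∃ Φ : R, star F * D * F = D - D * E - star E * D + Φ ∧
      ‖Φ‖ ≤ (3 - 2 * ‖E‖) / (1 - ‖E‖) ^ 2 * ‖D‖ * ‖E‖ ^ 2 := by
  set K := E * F
  have hFK : F = 1 - K := by rw [eq_sub_iff_add_eq, ← one_add_mul, hF]
  have hEK : E - K = E * K := by
    conv_rhs => rw [← sub_sub_cancel 1 K, ← hFK, mul_sub, mul_one]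
  have hK : ‖K‖ ≤ ‖E‖ / (1 - ‖E‖) := norm_mul_le_div_of_one_add_mul_eq_one hF hE
  refine ⟨_, hFK ▸ star_one_sub_mul_mul_one_sub D E K, (norm_congruence_remainder_le D E K).trans ?_⟩
  calc ‖D‖ * (2 * ‖E - K‖ + ‖K‖ ^ 2) ≤ ‖D‖ * (2 * (‖E‖ * ‖K‖) + ‖K‖ ^ 2) := by
        gcongr
        exact hEK ▸ norm_mul_le _ _
    _ ≤ ‖D‖ * ((3 - 2 * ‖E‖) / (1 - ‖E‖) ^ 2 * ‖E‖ ^ 2) := by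
        gcongr
        exact two_mul_mul_add_sq_le_of_le_div (norm_nonneg _) hE (norm_nonneg _) hK
    _ = (3 - 2 * ‖E‖) / (1 - ‖E‖) ^ 2 * ‖D‖ * ‖E‖ ^ 2 := by ring

end NormedRing

theorem CStarRing.norm_star_mul_mul_of_mem_unitary {R : Type*} [NormedRing R] [StarRing R]
    [CStarRing R] {U : R} (hU : U ∈ unitary R) (A : R) : ‖star U * A * U‖ = ‖A‖ := by
  rw [norm_mul_mem_unitary _ hU, norm_mem_unitary_mul _ (Unitary.star_mem hU)]

namespace Matrix

variable {n : Type*} [Fintype n] [DecidableEq n]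

theorem l2_opNorm_transpose_mul_mul_of_transpose_mul_self {A H : Matrix n n ℝ}
    (hH : Hᵀ * H = 1) : ‖Hᵀ * A * H‖ = ‖A‖ := by
  rw [← conjTranspose_eq_transpose_of_trivial] at hH ⊢
  exact CStarRing.norm_star_mul_mul_of_mem_unitary (mem_unitaryGroup_iff'.mpr hH) A

theorem mul_nonsing_inv_one_add_of_l2_opNorm_lt_one {E : Matrix n n ℝ} (hE : ‖E‖ < 1) :
    (1 + E) * (1 + E)⁻¹ = 1 := by
  refine mul_nonsing_inv _ ((isUnit_iff_isUnit_det _).mp ?_)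
  simpa using isUnit_one_sub_of_norm_lt_one (x := -E) (by rwa [norm_neg])

end Matrix

theorem stmt7_general {k m : ℕ}
    (A H E : Matrix (Fin k ⊕ Fin m) (Fin k ⊕ Fin m) ℝ)
    (D₁ : Matrix (Fin k) (Fin k) ℝ) (D₂ : Matrix (Fin m) (Fin m) ℝ)
    (hOrth : Hᵀ * H = 1)
    (hDiag : Hᵀ * A * H = Matrix.fromBlocks D₁ 0 0 D₂)
    (hE : ‖E‖ < 1)
    (Hhat : Matrix (Fin k ⊕ Fin m) (Fin k ⊕ Fin m) ℝ) (hHhat : Hhat = H * (1 + E)⁻¹)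
    (D : Matrix (Fin k ⊕ Fin m) (Fin k ⊕ Fin m) ℝ) (hD : D = Matrix.fromBlocks D₁ 0 0 D₂) :
    ∃ Φ₂ : Matrix (Fin k ⊕ Fin m) (Fin k ⊕ Fin m) ℝ,
      Hhatᵀ * A * Hhat = D - D * E - Eᵀ * D + Φ₂ ∧
      ‖Φ₂‖ ≤ (3 - 2 * ‖E‖) / (1 - ‖E‖) ^ 2 * ‖A‖ * ‖E‖ ^ 2 := by
  have hDA : D = Hᵀ * A * H := hD.trans hDiag.symm
  have hnorm : ‖D‖ = ‖A‖ := hDA ▸ l2_opNorm_transpose_mul_mul_of_transpose_mul_self hOrth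
  obtain ⟨Φ₂, hΦ₂, hbound⟩ := exists_remainder_star_mul_mul_of_one_add_mul_eq_one
    (mul_nonsing_inv_one_add_of_l2_opNorm_lt_one hE) hE D
  refine ⟨Φ₂, ?_, hnorm ▸ hbound⟩
  simp only [star_eq_conjTranspose, conjTranspose_eq_transpose_of_trivial] at hΦ₂
  rw [← hΦ₂, hHhat, hDA, transpose_mul]
  simp only [Matrix.mul_assoc]

/-- If `A` is symmetric, `H` orthogonal with `Hᵀ A H = diag(D₁, D₂)` block diagonal, and
`Ĥ = H (I + E)⁻¹` with `ε = ‖E‖ < 1`, then `Ĥᵀ A Ĥ = D - D E - Eᵀ D + Φ₂` with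
`‖Φ₂‖ ≤ χ(ε) ‖A‖ ε²`, where `χ(ε) = (3 - 2ε)/(1 - ε)²`. -/
theorem stmt7 {k m : ℕ}
    (A H E : Matrix (Fin k ⊕ Fin m) (Fin k ⊕ Fin m) ℝ)
    (D₁ : Matrix (Fin k) (Fin k) ℝ) (D₂ : Matrix (Fin m) (Fin m) ℝ)
    (hA : Aᵀ = A) (hOrth : Hᵀ * H = 1)
    (hDiag : Hᵀ * A * H = Matrix.fromBlocks D₁ 0 0 D₂)
    (hE : ‖E‖ < 1)
    (Hhat : Matrix (Fin k ⊕ Fin m) (Fin k ⊕ Fin m) ℝ) (hHhat : Hhat = H * (1 + E)⁻¹)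
    (D : Matrix (Fin k ⊕ Fin m) (Fin k ⊕ Fin m) ℝ) (hD : D = Matrix.fromBlocks D₁ 0 0 D₂) :
    ∃ Φ₂ : Matrix (Fin k ⊕ Fin m) (Fin k ⊕ Fin m) ℝ,
      Hhatᵀ * A * Hhat = D - D * E - Eᵀ * D + Φ₂ ∧
      ‖Φ₂‖ ≤ (3 - 2 * ‖E‖) / (1 - ‖E‖) ^ 2 * ‖A‖ * ‖E‖ ^ 2 :=
  stmt7_general A H E D₁ D₂ hOrth hDiag hE Hhat hHhat D hD
end

section
/- Let H be orthogonal and Ĥ = H(I + E)⁻¹ with ε := ‖E‖ < 1. Then Ĥᵀ Ĥ = I - E - Eᵀ + Φ₁ with ‖Φ₁‖ ≤ χ(ε)ε², where χ(ε) = (3-2ε)/(1-ε)². -/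
/-!
Write `B = (1 + E)⁻¹` and `K = E B`, so that `B = 1 - K` and `E K = E - K`. Orthogonality of `H`
gives `Ĥᵀ Ĥ = Bᵀ B`, and expanding, `Φ₁ = Bᵀ B - (1 - E - Eᵀ) = E K + (E K)ᵀ + Kᵀ K`. From
`K = E - E K` we get `‖K‖ ≤ ε / (1 - ε)`, and the three terms of `Φ₁` are then bounded by
`ε² / (1 - ε)`, `ε² / (1 - ε)` and `ε² / (1 - ε)²`, which add up to `χ(ε) ε²`.
-/

open Matrix
open scoped Matrix.Norms.L2Operator

theorem mul_mul_eq_sub_mul_of_one_add_mul_eq_one {R : Type*} [Ring R] {e b : R}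
    (h : (1 + e) * b = 1) : e * (e * b) = e - e * b := calc
  e * (e * b) = e * ((1 + e) * b) - e * b := by noncomm_ring
  _ = e - e * b := by rw [h, mul_one]

theorem star_mul_self_sub_eq_of_one_add_mul_eq_one {R : Type*} [Ring R] [StarRing R] {e b : R}
    (h : (1 + e) * b = 1) :
    star b * b - (1 - e - star e) = e * (e * b) + star (e * (e * b)) + star (e * b) * (e * b) := by
  have hb : b = 1 - e * b := by rw [← h]; noncomm_ring
  rw [mul_mul_eq_sub_mul_of_one_add_mul_eq_one h]
  generalize e * b = k at hb ⊢
  subst hb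
  simp only [star_sub, star_one]
  noncomm_ring

theorem norm_mul_le_of_one_add_mul_eq_one {R : Type*} [NormedRing R] {e b : R}
    (h : (1 + e) * b = 1) (he : ‖e‖ < 1) : ‖e * b‖ ≤ ‖e‖ / (1 - ‖e‖) := by
  have hek : e * b = e - e * (e * b) := by
    rw [mul_mul_eq_sub_mul_of_one_add_mul_eq_one h, sub_sub_self]
  have : ‖e * b‖ ≤ ‖e‖ + ‖e‖ * ‖e * b‖ := calc
    ‖e * b‖ = ‖e - e * (e * b)‖ := congrArg norm hek
    _ ≤ ‖e‖ + ‖e * (e * b)‖ := norm_sub_le _ _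
    _ ≤ ‖e‖ + ‖e‖ * ‖e * b‖ := by gcongr; exact norm_mul_le _ _
  rw [le_div_iff₀ (by linarith)]
  linarith

theorem norm_star_mul_self_sub_le_of_one_add_mul_eq_one {R : Type*} [NormedRing R] [StarRing R]
    [NormedStarGroup R] {e b : R} (h : (1 + e) * b = 1) (he : ‖e‖ < 1) :
    ‖star b * b - (1 - e - star e)‖ ≤ (3 - 2 * ‖e‖) / (1 - ‖e‖) ^ 2 * ‖e‖ ^ 2 := by
  have hk := norm_mul_le_of_one_add_mul_eq_one h he
  have hε : 0 < 1 - ‖e‖ := by linarith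
  rw [star_mul_self_sub_eq_of_one_add_mul_eq_one h]
  calc _ ≤ ‖e * (e * b)‖ + ‖star (e * (e * b))‖ + ‖star (e * b) * (e * b)‖ := norm_add₃_le
    _ ≤ 2 * (‖e‖ * ‖e * b‖) + ‖e * b‖ * ‖e * b‖ := by
      have h₁ := norm_mul_le e (e * b)
      have h₂ := norm_mul_le (star (e * b)) (e * b)
      simp only [norm_star] at h₂ ⊢
      linarith
    _ ≤ 2 * (‖e‖ * (‖e‖ / (1 - ‖e‖))) + ‖e‖ / (1 - ‖e‖) * (‖e‖ / (1 - ‖e‖)) := by gcongr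
    _ = (3 - 2 * ‖e‖) / (1 - ‖e‖) ^ 2 * ‖e‖ ^ 2 := by field_simp; ring

/-- If `H` is orthogonal and `Ĥ = H (I + E)⁻¹` with `ε = ‖E‖ < 1`, then
`Ĥᵀ Ĥ = I - E - Eᵀ + Φ₁` with `‖Φ₁‖ ≤ χ(ε) ε²`, where `χ(ε) = (3 - 2ε)/(1 - ε)²`. -/
theorem stmt8 {n : ℕ} (H E : Matrix (Fin n) (Fin n) ℝ)
    (hOrth : Hᵀ * H = 1) (hE : ‖E‖ < 1)
    (Hhat : Matrix (Fin n) (Fin n) ℝ) (hHhat : Hhat = H * (1 + E)⁻¹) :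
    ∃ Φ₁ : Matrix (Fin n) (Fin n) ℝ,
      Hhatᵀ * Hhat = 1 - E - Eᵀ + Φ₁ ∧
      ‖Φ₁‖ ≤ (3 - 2 * ‖E‖) / (1 - ‖E‖) ^ 2 * ‖E‖ ^ 2 := by
  have hunit : IsUnit (1 + E) := by
    simpa using isUnit_one_sub_of_norm_lt_one (x := -E) (by simpa using hE)
  have hinv : (1 + E) * (1 + E)⁻¹ = 1 := mul_nonsing_inv _ ((isUnit_iff_isUnit_det _).mp hunit)
  have hgram : Hhatᵀ * Hhat = star (1 + E)⁻¹ * (1 + E)⁻¹ := by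
    rw [hHhat, transpose_mul, Matrix.mul_assoc, ← Matrix.mul_assoc Hᵀ, hOrth, Matrix.one_mul]
    rfl
  refine ⟨Hhatᵀ * Hhat - (1 - E - Eᵀ), by abel, ?_⟩
  rw [hgram]
  exact norm_star_mul_self_sub_le_of_one_add_mul_eq_one hinv hE
end
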